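/- arXiv:math/0505151 — 2 statements merged into one kernel-verified Lean document; each statement's English description precedes it below -/
import Mathlib

section
/- Let R be a ring with invariant basis number. For every automorphism φ of the category S_R there exists a ring automorphism σ of R such that φ is naturally isomorphic (as a functor S_R → S_R) to the skew-inner automorphism φ^σ. -/
open CategoryTheory

/-- The category `S_R`: objects are the natural numbers, the object `n` standing for the
free left `R`-module `R^n = (Fin n → R)`; morphisms `n ⟶ m` are the `R`-linear maps
`R^n → R^m`.  This is (a presentation of) the full subcategory of left `R`-modules with
objects exactly the modules `R^n`, `n ∈ ℕ`. -/
def SR (R : Type) [Ring R] : Type := ℕ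

instance (R : Type) [Ring R] : Category (SR R) where
  Hom n m := (Fin n → R) →ₗ[R] (Fin m → R)
  id _ := LinearMap.id
  comp f g := g.comp f
  id_comp f := LinearMap.comp_id f
  comp_id f := LinearMap.id_comp f
  assoc f g h := (LinearMap.comp_assoc f g h).symm

variable {R : Type} [Ring R]

/-- The object of `S_R` corresponding to `n ∈ ℕ`, i.e. the module `R^n`. -/
def ob (R : Type) [Ring R] (n : ℕ) : SR R := n

/-- A morphism of `S_R` is just an `R`-linear map. -/
def ofLin {n m : ℕ} (f : (Fin n → R) →ₗ[R] (Fin m → R)) : ob R n ⟶ ob R m := f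

/-- The underlying `R`-linear map of a morphism of `S_R`. -/
def toLin {n m : SR R} (f : n ⟶ m) : (Fin n → R) →ₗ[R] (Fin m → R) := f

/-- The canonical injection `μ_i : R = R^1 → R^n` into the `i`-th coordinate,
as a morphism of `S_R`. -/
def mu (R : Type) [Ring R] (n : ℕ) (i : Fin n) : ob R 1 ⟶ ob R n :=
  ofLin ((LinearMap.single R (fun _ : Fin n => R) i).comp (LinearMap.proj 0))

/-- The skew of an `R`-linear map `f : R^n → R^m` by a ring automorphism `σ` of `R`:
the map `σ_m ∘ f ∘ σ_n⁻¹`, where `σ_k : R^k → R^k` is the coordinatewise application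
of `σ`.  It is again `R`-linear. -/
def skewMap (σ : R ≃+* R) {n m : ℕ} (f : (Fin n → R) →ₗ[R] (Fin m → R)) :
    (Fin n → R) →ₗ[R] (Fin m → R) where
  toFun x := fun j => σ (f (fun i => σ.symm (x i)) j)
  map_add' x y := by
    funext j
    have h : (fun i => σ.symm ((x + y) i)) =
        (fun i => σ.symm (x i)) + (fun i => σ.symm (y i)) := by
      funext i; simp
    show σ (f (fun i => σ.symm ((x + y) i)) j) =
      σ (f (fun i => σ.symm (x i)) j) + σ (f (fun i => σ.symm (y i)) j)
    rw [h, map_add]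
    simp
  map_smul' r x := by
    funext j
    have h : (fun i => σ.symm ((r • x) i)) =
        σ.symm r • (fun i => σ.symm (x i)) := by
      funext i; simp [Pi.smul_apply, map_mul]
    show σ (f (fun i => σ.symm ((r • x) i)) j) = ((RingHom.id R) r • fun j' => σ (f (fun i => σ.symm (x i)) j')) j
    rw [h, map_smul]
    simp [Pi.smul_apply, map_mul]

/-- The skew-inner automorphism `φ^σ` of the category `S_R` determined by a ring
automorphism `σ` of `R`: it fixes all objects and sends `f : R^n → R^m` to
`σ_m ∘ f ∘ σ_n⁻¹`. -/
def skewFunctor (σ : R ≃+* R) : SR R ⥤ SR R where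
  obj n := n
  map {n m} f := ofLin (skewMap σ (toLin f))
  map_id n := by
    show ofLin (skewMap σ LinearMap.id) = LinearMap.id
    apply LinearMap.ext
    intro x
    show (fun j => σ (σ.symm (x j))) = x
    funext j; simp
  map_comp {n m k} f g := by
    show ofLin (skewMap σ ((toLin g).comp (toLin f))) =
      (skewMap σ (toLin g)).comp (skewMap σ (toLin f))
    apply LinearMap.ext
    intro x
    show (fun j => σ ((toLin g) ((toLin f) (fun i => σ.symm (x i))) j)) =
      (fun j => σ ((toLin g) (fun i => σ.symm (σ ((toLin f) (fun i' => σ.symm (x i')) i))) j))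
    simp

/-!
An automorphism `F` of `S_R` is an equivalence, hence an additive functor, so it carries the
biproduct `R^(n+m) = R^n ⊕ R^m` to a biproduct of `F(R^n)` and `F(R^m)`. By invariant basis
number, ranks are then additive along `F`, so `rank F(R^n) = n · rank F(R)`; as `R` is in the
essential image, `F(R) = R`. On `End(R) = Rᵐᵒᵖ` (right multiplications `ρ_r`) the fully faithful
`F` induces a ring automorphism `σ` with `F(ρ_r) = ρ_{σ r}`, which is also how `φ^σ` acts. An
additive functor out of `S_R` is determined by its restriction to `End(R)`, because every `R^n`
is a biproduct of copies of `R`: if `u : F(R) ≅ G(R)` intertwines `F` and `G` on `End(R)`, the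
morphisms `∑ᵢ F(πᵢ) ≫ u ≫ G(μᵢ) : F(R^n) → G(R^n)` form a natural isomorphism `F ≅ G`.
-/

open Limits

namespace SR

instance : Preadditive (SR R) where
  homGroup n m := inferInstanceAs (AddCommGroup ((Fin n → R) →ₗ[R] (Fin m → R)))
  add_comp _ _ _ f f' g := LinearMap.comp_add f f' (toLin g)
  comp_add _ _ _ f g g' := LinearMap.add_comp (toLin f) g' g

/-- A reducible copy of `ob`, so that instances on `Fin n` apply to `Fin (of R n)`. -/
abbrev of (R : Type) [Ring R] (n : ℕ) : SR R := n

def rank (X : SR R) : ℕ := X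

variable {X Y Z : SR R}

lemma hom_ext {f g : X ⟶ Y} (h : ∀ x, toLin f x = toLin g x) : f = g :=
  LinearMap.ext h

@[simp] lemma toLin_comp (f : X ⟶ Y) (g : Y ⟶ Z) (x : Fin X → R) :
    toLin (f ≫ g) x = toLin g (toLin f x) := rfl

@[simp] lemma toLin_id (x : Fin X → R) : toLin (𝟙 X) x = x := rfl

@[simp] lemma toLin_zero (x : Fin X → R) : toLin (0 : X ⟶ Y) x = 0 := rfl

lemma toLin_sum {ι : Type} (s : Finset ι) (f : ι → (X ⟶ Y)) (x : Fin X → R) :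
    toLin (∑ i ∈ s, f i) x = ∑ i ∈ s, toLin (f i) x :=
  LinearMap.sum_apply _ _ _

section Biproducts

def splitEquiv (n m : ℕ) : (Fin (n + m) → R) ≃ₗ[R] (Fin n → R) × (Fin m → R) :=
  (LinearEquiv.funCongrLeft R R finSumFinEquiv).trans
    (LinearEquiv.sumArrowLequivProdArrow _ _ R R)

def biconeOfEquiv {P : SR R} (e : (Fin P → R) ≃ₗ[R] (Fin X → R) × (Fin Y → R)) :
    BinaryBicone X Y where
  pt := P
  fst := LinearMap.fst R _ _ ∘ₗ e.toLinearMap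
  snd := LinearMap.snd R _ _ ∘ₗ e.toLinearMap
  inl := e.symm.toLinearMap ∘ₗ LinearMap.inl R _ _
  inr := e.symm.toLinearMap ∘ₗ LinearMap.inr R _ _
  inl_fst := LinearMap.ext fun x => congrArg Prod.fst (e.apply_symm_apply (x, 0))
  inl_snd := LinearMap.ext fun x => congrArg Prod.snd (e.apply_symm_apply (x, 0))
  inr_fst := LinearMap.ext fun y => congrArg Prod.fst (e.apply_symm_apply (0, y))
  inr_snd := LinearMap.ext fun y => congrArg Prod.snd (e.apply_symm_apply (0, y))

def isBilimitBiconeOfEquiv {P : SR R} (e : (Fin P → R) ≃ₗ[R] (Fin X → R) × (Fin Y → R)) :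
    (biconeOfEquiv e).IsBilimit :=
  isBinaryBilimitOfTotal _ <| LinearMap.ext fun x => by
    change e.symm ((e x).1, 0) + e.symm (0, (e x).2) = x
    rw [← map_add, Prod.mk_add_mk, add_zero, zero_add]
    exact e.symm_apply_apply x

instance : HasBinaryBiproducts (SR R) where
  has_binary_biproduct X Y := .mk ⟨_, isBilimitBiconeOfEquiv (splitEquiv X Y)⟩

end Biproducts

section Rank

variable [InvariantBasisNumber R]

lemma eq_of_iso (e : X ≅ Y) : X = Y :=
  eq_of_fin_equiv R (LinearEquiv.ofLinearMap e.hom e.inv e.inv_hom_id e.hom_inv_id)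

variable (F : SR R ⥤ SR R) [F.Additive]

lemma rank_obj_add (n m : ℕ) :
    (F.obj (of R (n + m))).rank = (F.obj (of R n)).rank + (F.obj (of R m)).rank := by
  have := preservesBinaryBiproducts_of_preservesBiproducts F
  have hF := isBinaryBilimitOfPreserves F
    (isBilimitBiconeOfEquiv (P := of R (n + m)) (X := of R n) (Y := of R m) (splitEquiv n m))
  have hsum := isBilimitBiconeOfEquiv (splitEquiv (F.obj (of R n)) (F.obj (of R m)))
  exact congrArg rank (eq_of_iso (hF.isLimit.conePointUniqueUpToIso hsum.isLimit))

lemma rank_obj (n : ℕ) : (F.obj (of R n)).rank = n * (F.obj (of R 1)).rank := by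
  induction n with
  | zero => have := rank_obj_add F 0 0; simp only [Nat.add_zero] at this; omega
  | succ n ih => rw [rank_obj_add, ih, Nat.succ_mul]

lemma obj_one [F.EssSurj] : F.obj (of R 1) = of R 1 :=
  Nat.eq_one_of_mul_eq_one_left <|
    (rank_obj F _).symm.trans (congrArg rank (eq_of_iso (F.objObjPreimageIso (of R 1))))

end Rank

section Generator

def single (R : Type) [Ring R] (n : ℕ) (i : Fin n) : of R 1 ⟶ of R n :=
  LinearMap.single R (fun _ : Fin n => R) i ∘ₗ
    LinearMap.proj (R := R) (φ := fun _ : Fin 1 => R) 0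

def proj (R : Type) [Ring R] (n : ℕ) (i : Fin n) : of R n ⟶ of R 1 :=
  LinearMap.pi (R := R) fun (_ : Fin 1) => LinearMap.proj (R := R) (φ := fun _ : Fin n => R) i

def rmul (r : R) : of R 1 ⟶ of R 1 where
  toFun x j := x j * r
  map_add' x y := funext fun j => add_mul (x j) (y j) r
  map_smul' s x := funext fun j => mul_assoc s (x j) r

@[simp] lemma toLin_single (n : ℕ) (i : Fin n) (x : Fin 1 → R) :
    toLin (single R n i) x = Pi.single i (x 0) := rfl

@[simp] lemma toLin_proj (n : ℕ) (i : Fin n) (x : Fin n → R) :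
    toLin (proj R n i) x = fun _ => x i := rfl

@[simp] lemma toLin_rmul (r : R) (x : Fin 1 → R) : toLin (rmul r) x = fun j => x j * r := rfl

lemma single_proj (n : ℕ) (i j : Fin n) :
    single R n i ≫ proj R n j = if i = j then 𝟙 _ else 0 := by
  split_ifs with h
  · subst h
    exact hom_ext fun x => funext fun k => by simp [Subsingleton.elim k 0]
  · exact hom_ext fun x => funext fun k => by simp [Ne.symm h]

lemma sum_proj_single (n : ℕ) : ∑ i : Fin n, proj R n i ≫ single R n i = 𝟙 _ :=
  hom_ext fun x => by
    rw [toLin_sum]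
    funext k
    simp [Pi.single_apply]

lemma rmul_comp_rmul (a b : R) : rmul a ≫ rmul b = rmul (a * b) :=
  LinearMap.ext fun x => funext fun j => mul_assoc (x j) a b

lemma rmul_add (a b : R) : rmul (a + b) = rmul a + rmul b :=
  LinearMap.ext fun x => funext fun j => mul_add (x j) a b

lemma toLin_of_one (g : of R 1 ⟶ X) (x : Fin 1 → R) : toLin g x = x 0 • toLin g 1 := by
  rw [← map_smul]
  congr 1
  funext j
  simp [Subsingleton.elim j 0]

def rmulEquiv : R ≃ (of R 1 ⟶ of R 1) where
  toFun := rmul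
  invFun f := toLin f 1 0
  left_inv r := one_mul r
  right_inv f := hom_ext fun x => funext fun j => by
    simp [toLin_of_one f x, Subsingleton.elim j 0]

lemma eq_sum_rmul_single {n : ℕ} (g : of R 1 ⟶ of R n) :
    g = ∑ i : Fin n, rmul (toLin g 1 i) ≫ single R n i :=
  hom_ext fun x => by
    rw [toLin_sum, toLin_of_one g x]
    funext k
    simp [Pi.single_apply]

end Generator

lemma skewFunctor_map_rmul (σ : R ≃+* R) (r : R) :
    (skewFunctor σ).map (rmul r) = rmul (σ r) :=
  hom_ext fun x => funext fun j => show σ (σ.symm (x j) * r) = x j * σ r by simp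

instance (σ : R ≃+* R) : (skewFunctor σ).Additive where
  map_add := hom_ext fun _ => funext fun _ => map_add σ _ _

lemma exists_ringEquiv_map_rmul (F : SR R ⥤ SR R) (hF : F.FullyFaithful) [F.Additive]
    (e : F.obj (of R 1) ≅ of R 1) :
    ∃ σ : R ≃+* R, ∀ r, F.map (rmul r) ≫ e.hom = e.hom ≫ rmul (σ r) := by
  let T : (of R 1 ⟶ of R 1) ≃ (of R 1 ⟶ of R 1) := hF.homEquiv.trans (e.homCongr e)
  let σ : R ≃ R := rmulEquiv.trans (T.trans rmulEquiv.symm)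
  have hσ (r : R) : rmul (σ r) = e.inv ≫ F.map (rmul r) ≫ e.hom :=
    rmulEquiv.apply_symm_apply (T (rmul r))
  refine ⟨{ σ with
    map_mul' := fun a b => rmulEquiv.injective ?_
    map_add' := fun a b => rmulEquiv.injective ?_ }, fun r => ?_⟩
  · change rmul (σ (a * b)) = rmul (σ a * σ b)
    simp [← rmul_comp_rmul, hσ]
  · change rmul (σ (a + b)) = rmul (σ a + σ b)
    simp [rmul_add, hσ, Preadditive.add_comp, Preadditive.comp_add]
  · change _ = e.hom ≫ rmul (σ r)
    simp [hσ]

section IsoOfOne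

variable {D : Type*} [Category D] [Preadditive D] {F G H : SR R ⥤ D}

def appOfOne (u : F.obj (of R 1) ⟶ G.obj (of R 1)) (n : ℕ) :
    F.obj (of R n) ⟶ G.obj (of R n) :=
  ∑ i : Fin n, F.map (proj R n i) ≫ u ≫ G.map (single R n i)

lemma map_single_appOfOne [F.Additive] (u : F.obj (of R 1) ⟶ G.obj (of R 1)) {n : ℕ}
    (i : Fin n) : F.map (single R n i) ≫ appOfOne u n = u ≫ G.map (single R n i) := by
  simp [appOfOne, Preadditive.comp_sum, ← Functor.map_comp_assoc, single_proj, apply_ite,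
    ite_comp]

lemma appOfOne_comp [G.Additive] (u : F.obj (of R 1) ⟶ G.obj (of R 1))
    (v : G.obj (of R 1) ⟶ H.obj (of R 1)) (n : ℕ) :
    appOfOne u n ≫ appOfOne v n = appOfOne (u ≫ v) n := by
  rw [appOfOne, Preadditive.sum_comp]
  simp only [Category.assoc, map_single_appOfOne]
  simp only [appOfOne, Category.assoc]

lemma appOfOne_id [F.Additive] (n : ℕ) : appOfOne (𝟙 (F.obj (of R 1))) n = 𝟙 _ := by
  simp [appOfOne, ← Functor.map_comp, ← Functor.map_sum, sum_proj_single]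

variable [F.Additive] [G.Additive] {u : F.obj (of R 1) ⟶ G.obj (of R 1)}

lemma map_comp_appOfOne_of_one (hu : ∀ r, F.map (rmul r) ≫ u = u ≫ G.map (rmul r)) {n : ℕ}
    (g : of R 1 ⟶ of R n) : F.map g ≫ appOfOne u n = u ≫ G.map g := by
  rw [eq_sum_rmul_single g]
  simp [Functor.map_sum, Preadditive.sum_comp, Preadditive.comp_sum, map_single_appOfOne,
    reassoc_of% hu]

lemma appOfOne_naturality (hu : ∀ r, F.map (rmul r) ≫ u = u ≫ G.map (rmul r)) {n m : ℕ}
    (f : of R n ⟶ of R m) : F.map f ≫ appOfOne u m = appOfOne u n ≫ G.map f := by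
  have hf : F.map f = ∑ i, F.map (proj R n i) ≫ F.map (single R n i ≫ f) := by
    conv_lhs => rw [← Category.id_comp f, ← sum_proj_single, Preadditive.sum_comp, F.map_sum]
    simp only [Category.assoc, Functor.map_comp]
  calc F.map f ≫ appOfOne u m
      = ∑ i, F.map (proj R n i) ≫ u ≫ G.map (single R n i ≫ f) := by
        simp only [hf, Preadditive.sum_comp, Category.assoc, map_comp_appOfOne_of_one hu]
    _ = appOfOne u n ≫ G.map f := by
        simp only [appOfOne, Preadditive.sum_comp, Category.assoc, G.map_comp]

def isoAppOfOne (e : F.obj (of R 1) ≅ G.obj (of R 1)) (n : ℕ) :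
    F.obj (of R n) ≅ G.obj (of R n) where
  hom := appOfOne e.hom n
  inv := appOfOne e.inv n
  hom_inv_id := by rw [appOfOne_comp, e.hom_inv_id, appOfOne_id]
  inv_hom_id := by rw [appOfOne_comp, e.inv_hom_id, appOfOne_id]

def isoOfOne (e : F.obj (of R 1) ≅ G.obj (of R 1))
    (he : ∀ r, F.map (rmul r) ≫ e.hom = e.hom ≫ G.map (rmul r)) : F ≅ G :=
  NatIso.ofComponents (fun X => isoAppOfOne e X.rank) (fun f => appOfOne_naturality he f)

end IsoOfOne

end SR

/-- if `R` is a ring with invariant basis number, then every automorphism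
`φ` of the category `S_R` is naturally isomorphic to the skew-inner automorphism `φ^σ`
for some ring automorphism `σ` of `R`. -/
theorem stmt4 (R : Type) [Ring R]
    (hIBN : ∀ n m : ℕ, Nonempty ((Fin n → R) ≃ₗ[R] (Fin m → R)) → n = m)
    (φ : Aut (Cat.of (SR R))) :
    ∃ σ : R ≃+* R, Nonempty ((φ.hom.toFunctor : SR R ⥤ SR R) ≅ skewFunctor σ) := by
  have : InvariantBasisNumber R := ⟨fun e => hIBN _ _ ⟨e⟩⟩
  let E : SR R ≌ SR R := Cat.equivOfIso φ
  have : E.functor.Additive := Functor.additive_of_preserves_binary_products _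
  let e : E.functor.obj (SR.of R 1) ≅ SR.of R 1 := eqToIso (SR.obj_one E.functor)
  obtain ⟨σ, hσ⟩ := SR.exists_ringEquiv_map_rmul E.functor E.fullyFaithfulFunctor e
  exact ⟨σ, ⟨SR.isoOfOne (F := E.functor) (G := skewFunctor σ) e
    fun r => (hσ r).trans (congrArg _ (SR.skewFunctor_map_rmul σ r).symm)⟩⟩
end

section
/- Let R be a ring belonging to one of the following classes: left (or right) Artinian rings; left (or right) Noetherian rings; nontrivial commutative rings; division rings. Then every automorphism of the category C_R of finitely generated free left R-modules is semi-inner. -/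
/-!
Fix an isomorphism `u : R ≅ Φ(R)`. Identifying `a ∈ F` with the morphism `R → F, 1 ↦ a`, put
`s_F(a) = Φ(a)(u 1)`. Naturality of `s` is functoriality of `Φ`, additivity comes from `Φ` being an
equivalence of additive categories, and `σ = u⁻¹ ∘ s_R` is then a ring automorphism with
`s_F(r • a) = σ(r) • s_F(a)`.

Such a `u` exists: `R` is a retract of every nonzero free module, so `Φ(R)` is a retract of
`Φ(Φ⁻¹ R) ≅ R`. A basis of `Φ(R)` indexed by `κ` gives `a, d : κ → R` with `a i * d j = δ i j`, so
`x ↦ (x * d j)ⱼ` maps `R` onto `R^κ`, and the rank condition for `R` or for `Rᵐᵒᵖ` forces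
`|κ| = 1`. Every ring in the statement satisfies one of them: Artinian rings are Noetherian
(Hopkins–Levitzki), Noetherian and commutative rings have the strong rank condition, and a division
ring is a simple module over itself.
-/

open CategoryTheory

/-- The category `C_R`: the full subcategory of the category of left `R`-modules whose
objects are the finitely generated free left `R`-modules. -/
def CR (R : Type) [Ring R] : Type 1 :=
  ObjectProperty.FullSubcategory (fun M : ModuleCat.{0} R => Module.Finite R M ∧ Module.Free R M)

instance (R : Type) [Ring R] : Category (CR R) :=
  ObjectProperty.FullSubcategory.category _

/-- A morphism of `C_R` is just an `R`-linear map. -/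
def homToLin {R : Type} [Ring R] {F G : CR R} (f : F ⟶ G) : F.obj →ₗ[R] G.obj := f.hom.hom

/-- An automorphism `φ` of the category `C_R` is *semi-inner* if there are a ring
automorphism `σ` of `R` and additive isomorphisms `s_F : F ≃+ φ(F)`, one for each object
`F` of `C_R`, with `s_F (r • a) = σ r • s_F a`, such that `φ(f) ∘ s_F = s_G ∘ f` for
every `R`-linear map `f : F ⟶ G`. -/
def SemiInner (R : Type) [Ring R] (φ : Aut (Cat.of (CR R))) : Prop :=
  ∃ (σ : R ≃+* R)
    (s : ∀ F : CR R, F.obj ≃+ ((φ.hom.toFunctor : CR R ⥤ CR R).obj F).obj),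
    (∀ (F : CR R) (r : R) (a : F.obj), s F (r • a) = σ r • s F a) ∧
    (∀ (F G : CR R) (f : F ⟶ G) (a : F.obj),
      homToLin ((φ.hom.toFunctor : CR R ⥤ CR R).map f) (s F a) = s G (homToLin f a))

section RankCondition

variable {R : Type*} [Ring R]

theorem card_le_one_of_mul_eq_ite [RankCondition R] {κ : Type*} [Fintype κ] [DecidableEq κ]
    (a d : κ → R) (h : ∀ i j, a i * d j = if i = j then 1 else 0) : Fintype.card κ ≤ 1 := by
  let f : (Unit → R) →ₗ[R] κ → R := LinearMap.pi fun j ↦ (LinearMap.proj ()).smulRight (d j)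
  have hf : Function.Surjective f := fun z ↦ ⟨fun _ ↦ ∑ i, z i * a i, funext fun j ↦ by
    simp [f, Finset.sum_mul, mul_assoc, h]⟩
  simpa using card_le_of_surjective R f hf

theorem card_le_one_of_mul_eq_ite' (hR : RankCondition R ∨ RankCondition Rᵐᵒᵖ) {κ : Type*}
    [Fintype κ] [DecidableEq κ] (a d : κ → R) (h : ∀ i j, a i * d j = if i = j then 1 else 0) :
    Fintype.card κ ≤ 1 := by
  rcases hR with hR | hR
  · exact card_le_one_of_mul_eq_ite a d h
  · refine card_le_one_of_mul_eq_ite (MulOpposite.op ∘ d) (MulOpposite.op ∘ a) fun i j ↦ ?_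
    simp only [Function.comp_apply, ← MulOpposite.op_mul, h j i, eq_comm (a := j)]
    split_ifs <;> rfl

variable {M : Type*} [AddCommGroup M] [Module R M]

theorem Module.Basis.card_le_one_of_retract (hR : RankCondition R ∨ RankCondition Rᵐᵒᵖ)
    {κ : Type*} [Fintype κ] (b : Module.Basis κ R M) (i : M →ₗ[R] R) (p : R →ₗ[R] M)
    (hpi : ∀ m, p (i m) = m) : Fintype.card κ ≤ 1 := by
  classical
  refine card_le_one_of_mul_eq_ite' hR (fun j ↦ i (b j)) (fun k ↦ b.repr (p 1) k) fun j k ↦ ?_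
  have hb : b j = i (b j) • p 1 := by rw [← map_smul, smul_eq_mul, mul_one, hpi]
  simpa [Finsupp.single_apply, eq_comm] using congr(b.repr $hb k)

theorem nonempty_linearEquiv_of_retract (hR : RankCondition R ∨ RankCondition Rᵐᵒᵖ)
    [Module.Free R M] [Nontrivial M] (i : M →ₗ[R] R) (p : R →ₗ[R] M) (hpi : ∀ m, p (i m) = m) :
    Nonempty (M ≃ₗ[R] R) := by
  have : Module.Finite R M := .of_surjective p fun m ↦ ⟨i m, hpi m⟩
  let b := Module.Free.chooseBasis R M
  have : Unique (Module.Free.ChooseBasisIndex R M) :=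
    (Fintype.card_eq_one_iff_nonempty_unique.mp
      (le_antisymm (b.card_le_one_of_retract hR i p hpi) Fintype.card_pos)).some
  exact ⟨b.equivFun.trans (LinearEquiv.funUnique _ R R)⟩

end RankCondition

theorem rankCondition_or_rankCondition_op (R : Type*) [Ring R] [Nontrivial R]
    (hR : IsArtinian R R ∨ IsArtinian Rᵐᵒᵖ Rᵐᵒᵖ ∨
          IsNoetherian R R ∨ IsNoetherian Rᵐᵒᵖ Rᵐᵒᵖ ∨
          ((∀ a b : R, a * b = b * a) ∧ Nontrivial R) ∨
          (Nontrivial R ∧ ∀ a : R, a ≠ 0 → IsUnit a)) :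
    RankCondition R ∨ RankCondition Rᵐᵒᵖ := by
  rcases hR with h | h | h | h | ⟨hcomm, -⟩ | hdiv
  · exact .inl inferInstance
  · exact .inr inferInstance
  · exact .inl inferInstance
  · exact .inr inferInstance
  · let : CommRing R := { ‹Ring R› with mul_comm := hcomm }
    exact .inl inferInstance
  · have : IsSimpleModule R R := isSimpleModule_self_iff_isUnit.mpr hdiv
    exact .inl inferInstance

namespace CR

variable {R : Type} [Ring R]

/-- Reducible, so that instance search sees `(unit R).obj` as `R`. -/
abbrev unit (R : Type) [Ring R] : CR R :=
  ⟨ModuleCat.of R R, Module.Finite.self R, Module.Free.self R⟩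

def ofHom {F G : CR R} (l : F.obj →ₗ[R] G.obj) : F ⟶ G :=
  ObjectProperty.homMk (ModuleCat.ofHom l)

lemma hom_ext {F G : CR R} {f g : F ⟶ G} (h : ∀ x, homToLin f x = homToLin g x) : f = g :=
  InducedCategory.hom_ext (ModuleCat.hom_ext (LinearMap.ext h))

@[simp]
lemma homToLin_comp {F G H : CR R} (f : F ⟶ G) (g : G ⟶ H) :
    homToLin (f ≫ g) = homToLin g ∘ₗ homToLin f := rfl

lemma homToLin_id (F : CR R) : homToLin (𝟙 F) = LinearMap.id := rfl

instance : Preadditive (CR R) :=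
  Preadditive.fullSubcategory _

noncomputable instance : Limits.HasBinaryBiproducts (CR R) where
  has_binary_biproduct F G := by
    have := F.property.1; have := F.property.2; have := G.property.1; have := G.property.2
    refine Limits.hasBinaryBiproduct_of_total
      { pt := ⟨ModuleCat.of R (F.obj × G.obj), inferInstance, inferInstance⟩
        fst := ofHom (LinearMap.fst R F.obj G.obj)
        snd := ofHom (LinearMap.snd R F.obj G.obj)
        inl := ofHom (LinearMap.inl R F.obj G.obj)
        inr := ofHom (LinearMap.inr R F.obj G.obj) } ?_
    refine hom_ext fun x ↦ ?_
    show ((x.1, 0) : F.obj × G.obj) + (0, x.2) = x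
    simp

lemma isZero_iff_subsingleton {F : CR R} : Limits.IsZero F ↔ Subsingleton F.obj := by
  rw [Limits.IsZero.iff_id_eq_zero]
  constructor
  · intro h
    have hzero : ∀ x : F.obj, x = 0 := fun x ↦ congr(homToLin $h x)
    exact ⟨fun x y ↦ (hzero x).trans (hzero y).symm⟩
  · intro _
    exact hom_ext fun _ ↦ Subsingleton.elim _ _

def unitHomEquiv (F : CR R) : (unit R ⟶ F) ≃+ F.obj where
  toFun f := homToLin f (1 : R)
  invFun a := ofHom (LinearMap.toSpanSingleton R F.obj a)
  left_inv f := hom_ext fun (x : R) ↦ by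
    change x • homToLin f (1 : R) = homToLin f x
    rw [← map_smul, smul_eq_mul, mul_one]
  right_inv a := one_smul R a
  map_add' _ _ := rfl

lemma unitHomEquiv_symm_apply (F : CR R) (a : F.obj) (r : R) :
    homToLin ((unitHomEquiv F).symm a) r = r • a := rfl

lemma unitHomEquiv_symm_homToLin {F G : CR R} (f : F ⟶ G) (a : F.obj) :
    (unitHomEquiv G).symm (homToLin f a) = (unitHomEquiv F).symm a ≫ f :=
  hom_ext fun (r : R) ↦ (map_smul (homToLin f) r a).symm

section Transport

variable (Φ : CR R ⥤ CR R) [Φ.Full] [Φ.Faithful] [Φ.Additive] (u : unit R ≅ Φ.obj (unit R))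

noncomputable def transportHom (F : CR R) : (unit R ⟶ F) ≃+ (unit R ⟶ Φ.obj F) where
  toFun f := u.hom ≫ Φ.map f
  invFun g := Φ.preimage (u.inv ≫ g)
  left_inv f := by simp
  right_inv g := by simp
  map_add' f g := by simp

noncomputable def semiInnerEquiv (F : CR R) : F.obj ≃+ (Φ.obj F).obj :=
  (unitHomEquiv F).symm.trans ((transportHom Φ u F).trans (unitHomEquiv (Φ.obj F)))

lemma semiInnerEquiv_apply {F : CR R} (a : F.obj) :
    semiInnerEquiv Φ u F a = homToLin (Φ.map ((unitHomEquiv F).symm a)) (homToLin u.hom 1) :=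
  rfl

lemma semiInnerEquiv_naturality {F G : CR R} (f : F ⟶ G) (a : F.obj) :
    homToLin (Φ.map f) (semiInnerEquiv Φ u F a) = semiInnerEquiv Φ u G (homToLin f a) := by
  simp [semiInnerEquiv_apply, unitHomEquiv_symm_homToLin]

noncomputable def inducedAddEquiv : R ≃+ R :=
  (semiInnerEquiv Φ u (unit R)).trans (Iso.toLinearEquiv ((ObjectProperty.ι _).mapIso u.symm)).toAddEquiv

lemma semiInnerEquiv_unit (r : R) :
    semiInnerEquiv Φ u (unit R) r = inducedAddEquiv Φ u r • homToLin u.hom (1 : R) := by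
  rw [← map_smul]
  change _ = homToLin u.hom (homToLin u.inv (semiInnerEquiv Φ u (unit R) r) • (1 : R))
  rw [smul_eq_mul, mul_one, ← LinearMap.comp_apply, ← homToLin_comp, u.inv_hom_id, homToLin_id,
    LinearMap.id_apply]

lemma semiInnerEquiv_smul {F : CR R} (r : R) (a : F.obj) :
    semiInnerEquiv Φ u F (r • a) = inducedAddEquiv Φ u r • semiInnerEquiv Φ u F a := by
  -- `r • a` is the image of `r` under the morphism `R → F, 1 ↦ a`
  rw [← unitHomEquiv_symm_apply, ← semiInnerEquiv_naturality, semiInnerEquiv_unit, map_smul]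
  rfl

lemma inducedAddEquiv_mul (r s : R) :
    inducedAddEquiv Φ u (r * s) = inducedAddEquiv Φ u r * inducedAddEquiv Φ u s := by
  change homToLin u.inv (semiInnerEquiv Φ u (unit R) (r • s)) =
    inducedAddEquiv Φ u r • homToLin u.inv (semiInnerEquiv Φ u (unit R) s)
  rw [semiInnerEquiv_smul, map_smul]

noncomputable def inducedRingEquiv : R ≃+* R :=
  { inducedAddEquiv Φ u with map_mul' := inducedAddEquiv_mul Φ u }

end Transport

theorem semiInner_of_iso (φ : Aut (Cat.of (CR R)))
    (u : unit R ≅ (φ.hom.toFunctor : CR R ⥤ CR R).obj (unit R)) : SemiInner R φ := by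
  let Φ : CR R ⥤ CR R := φ.hom.toFunctor
  have : Φ.IsEquivalence := (Cat.equivOfIso φ).isEquivalence_functor
  have : Φ.Additive := Functor.additive_of_preserves_binary_products Φ
  exact ⟨inducedRingEquiv Φ u, semiInnerEquiv Φ u, fun _ ↦ semiInnerEquiv_smul Φ u,
    fun _ _ ↦ semiInnerEquiv_naturality Φ u⟩

lemma nonempty_retract_unit (X : CR R) [Nontrivial X.obj] : Nonempty (Retract (unit R) X) := by
  have := X.property.2
  let b := Module.Free.chooseBasis R X.obj
  obtain ⟨i⟩ := b.index_nonempty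
  refine ⟨⟨(unitHomEquiv X).symm (b i), ofHom (b.coord i), hom_ext fun (x : R) ↦ ?_⟩⟩
  change b.repr (x • b i) i = x
  simp

lemma nonempty_iso_unit_of_retract (hR : RankCondition R ∨ RankCondition Rᵐᵒᵖ) {X : CR R}
    [Nontrivial X.obj] (h : Retract X (unit R)) : Nonempty (X ≅ unit R) := by
  have := X.property.2
  obtain ⟨e⟩ := nonempty_linearEquiv_of_retract hR (homToLin h.i) (homToLin h.r)
    fun m ↦ congr(homToLin $h.retract m)
  exact ⟨ObjectProperty.isoMk _ e.toModuleIso⟩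

theorem nonempty_iso_map_unit [Nontrivial R] (hR : RankCondition R ∨ RankCondition Rᵐᵒᵖ)
    (Φ : CR R ⥤ CR R) [Φ.IsEquivalence] : Nonempty (unit R ≅ Φ.obj (unit R)) := by
  have hR₀ : ¬ Limits.IsZero (unit R) := by
    rw [isZero_iff_subsingleton]
    exact not_subsingleton R
  let X := Φ.objPreimage (unit R)
  have : Nontrivial X.obj := by
    rw [← not_subsingleton_iff_nontrivial, ← isZero_iff_subsingleton]
    exact fun h ↦ hR₀ ((Φ.map_isZero h).of_iso (Φ.objObjPreimageIso _).symm)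
  have : Nontrivial (Φ.obj (unit R)).obj := by
    rw [← not_subsingleton_iff_nontrivial, ← isZero_iff_subsingleton]
    exact fun h ↦ hR₀ (Limits.IsZero.of_full_of_faithful_of_isZero Φ _ h)
  obtain ⟨r⟩ := nonempty_retract_unit X
  obtain ⟨e⟩ := nonempty_iso_unit_of_retract hR ((r.map Φ).trans (Φ.objObjPreimageIso _).retract)
  exact ⟨e.symm⟩

end CR

/-- if `R` is left or right Artinian, left or right Noetherian, a
nontrivial commutative ring, or a division ring, then every automorphism of the
category `C_R` of finitely generated free left `R`-modules is semi-inner. -/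
theorem stmt8 (R : Type) [Ring R]
    (hR : IsArtinian R R ∨ IsArtinian Rᵐᵒᵖ Rᵐᵒᵖ ∨
          IsNoetherian R R ∨ IsNoetherian Rᵐᵒᵖ Rᵐᵒᵖ ∨
          ((∀ a b : R, a * b = b * a) ∧ Nontrivial R) ∨
          (Nontrivial R ∧ ∀ a : R, a ≠ 0 → IsUnit a))
    (φ : Aut (Cat.of (CR R))) :
    SemiInner R φ := by
  let Φ : CR R ⥤ CR R := φ.hom.toFunctor
  have : Φ.IsEquivalence := (Cat.equivOfIso φ).isEquivalence_functor
  obtain ⟨u⟩ : Nonempty (CR.unit R ≅ Φ.obj (CR.unit R)) := by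
    rcases subsingleton_or_nontrivial R with hR₀ | hR₀
    · have hzero (F : CR R) : Limits.IsZero F :=
        CR.isZero_iff_subsingleton.mpr (Module.subsingleton R F.obj)
      exact ⟨(hzero _).iso (hzero _)⟩
    · exact CR.nonempty_iso_map_unit (rankCondition_or_rankCondition_op R hR) Φ
  exact CR.semiInner_of_iso φ u
end
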